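/- arXiv:2506.06338 — 2 statements merged into one kernel-verified Lean document; each statement's English description precedes it below -/
import Mathlib

section
/- Let a₁₁,a₁₂,a₂₁,a₂₂ > 0 with a₁₁a₂₂ ≠ a₁₂a₂₁, and let R₁,R₂,C₁,C₂ > 0 with R₁+R₂ = C₁+C₂. Set α = a₁₁a₂₂, β = a₁₂a₂₁, det = α−β, and Δ = (α(C₂+R₂)+β(C₁−R₂))² − 4αC₂R₂·det. Then the discriminant Δ is nonnegative. -/
/-!
Write `Δ = X² - 4αC₂R₂(α - β)` with `X = α(C₂ + R₂) + β(C₁ - R₂)`. If `α ≤ β` the subtracted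
term is nonpositive. If `α ≥ β`, splitting `X = (αC₂ + βC₁) + (α - β)R₂` and completing the square
gives `Δ = (αC₂ + βC₁ - (α - β)R₂)² + 4βC₁R₂(α - β)`, a sum of nonnegative terms.
-/

theorem discriminant_eq_sq_add (α β C₁ C₂ R : ℝ) :
    (α * (C₂ + R) + β * (C₁ - R)) ^ 2 - 4 * α * C₂ * R * (α - β)
      = (α * C₂ + β * C₁ - (α - β) * R) ^ 2 + 4 * β * C₁ * R * (α - β) := by
  ring

theorem discriminant_nonneg_of_nonneg {α β C₁ C₂ R : ℝ} (hα : 0 ≤ α) (hβ : 0 ≤ β)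
    (hC₁ : 0 ≤ C₁) (hC₂ : 0 ≤ C₂) (hR : 0 ≤ R) :
    0 ≤ (α * (C₂ + R) + β * (C₁ - R)) ^ 2 - 4 * α * C₂ * R * (α - β) := by
  rcases le_total α β with hαβ | hβα
  · have hneg : 4 * α * C₂ * R * (α - β) ≤ 0 :=
      mul_nonpos_of_nonneg_of_nonpos (by positivity) (sub_nonpos.mpr hαβ)
    linarith [sq_nonneg (α * (C₂ + R) + β * (C₁ - R))]
  · have hdet : 0 ≤ α - β := sub_nonneg.mpr hβα
    rw [discriminant_eq_sq_add]
    positivity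

theorem discriminant_nonneg_general (a11 a12 a21 a22 R2 C1 C2 : ℝ)
    (ha11 : 0 < a11) (ha12 : 0 < a12) (ha21 : 0 < a21) (ha22 : 0 < a22)
    (hR2 : 0 < R2) (hC1 : 0 < C1) (hC2 : 0 < C2) :
    0 ≤ (a11 * a22 * (C2 + R2) + a12 * a21 * (C1 - R2)) ^ 2
        - 4 * (a11 * a22) * C2 * R2 * (a11 * a22 - a12 * a21) :=
  discriminant_nonneg_of_nonneg (mul_pos ha11 ha22).le (mul_pos ha12 ha21).le hC1.le hC2.le
    hR2.le

theorem discriminant_nonneg (a11 a12 a21 a22 R1 R2 C1 C2 : ℝ)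
    (ha11 : 0 < a11) (ha12 : 0 < a12) (ha21 : 0 < a21) (ha22 : 0 < a22)
    (hR1 : 0 < R1) (hR2 : 0 < R2) (hC1 : 0 < C1) (hC2 : 0 < C2)
    (hns : a11 * a22 ≠ a12 * a21) (hcons : R1 + R2 = C1 + C2) :
    0 ≤ (a11 * a22 * (C2 + R2) + a12 * a21 * (C1 - R2)) ^ 2
        - 4 * (a11 * a22) * C2 * R2 * (a11 * a22 - a12 * a21) :=
  discriminant_nonneg_general a11 a12 a21 a22 R2 C1 C2 ha11 ha12 ha21 ha22 hR2 hC1 hC2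
end

section
/- Let α > 0, β > 0 with α ≠ β, and R₂, C₁, C₂ > 0 with C₁ + C₂ > R₂. Then Δ = (α(C₂+R₂)+β(C₁−R₂))² − 4αC₂R₂(α−β) > 0 and the value r₂ = (α(C₂+R₂)+β(C₁−R₂) − √Δ)/(2a₂₂(α−β)) is strictly positive for any a₂₂ > 0, and satisfies a₂₂·r₂ < R₂. -/
/-!
The value `a₂₂ r₂` is a root of `q(x) = (α - β) x² - B x + α C₂ R₂`, where
`B = α (C₂ + R₂) + β (C₁ - R₂)` and `Δ` is the discriminant of `q`. Since `q(0) = α C₂ R₂ > 0` and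
`q(R₂) = -β C₁ R₂ < 0`, the quadratic changes sign on `(0, R₂)`, so `Δ > 0`; whichever way the
parabola opens, the root it crosses there is `(B - √Δ) / (2 (α - β))`.
-/

theorem discrim_pos_of_pos_of_neg {a b c x y : ℝ} (hx : 0 < a * (x * x) + b * x + c)
    (hy : a * (y * y) + b * y + c < 0) : 0 < discrim a b c := by
  by_contra! hΔ
  have hcomplete_square (t : ℝ) :
      4 * a * (a * (t * t) + b * t + c) = (2 * a * t + b) ^ 2 - discrim a b c := by
    simp only [discrim]; ring
  have hax := hcomplete_square x
  have hay := hcomplete_square y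
  rcases lt_trichotomy a 0 with ha | rfl | ha
  · nlinarith [sq_nonneg (2 * a * x + b)]
  · have hb : b = 0 := by
      simp only [discrim, mul_zero, zero_mul, sub_zero] at hΔ
      exact pow_eq_zero_iff two_ne_zero |>.mp (le_antisymm hΔ (sq_nonneg b))
    subst hb
    linarith
  · nlinarith [sq_nonneg (2 * a * y + b)]

theorem quadratic_root_mem_Ioo_of_pos_of_neg {a b c x y : ℝ} (ha : a ≠ 0) (hxy : x < y)
    (hx : 0 < a * (x * x) + b * x + c) (hy : a * (y * y) + b * y + c < 0) :
    (-b - √(discrim a b c)) / (2 * a) ∈ Set.Ioo x y := by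
  have hΔ := discrim_pos_of_pos_of_neg hx hy
  set s := √(discrim a b c)
  have hs : 0 < s := Real.sqrt_pos.mpr hΔ
  have hs2 : s * s = discrim a b c := Real.mul_self_sqrt hΔ.le
  set p₀ := (-b - s) / 2
  set p₁ := (-b + s) / 2
  have hp : p₀ < p₁ := by simp only [p₀, p₁]; linarith
  have hfactor (t : ℝ) : a * (a * (t * t) + b * t + c) = (a * t - p₀) * (a * t - p₁) := by
    simp only [p₀, p₁, discrim] at hs2 ⊢
    linear_combination hs2 / 4
  have hroot : (-b - s) / (2 * a) = p₀ / a := by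
    simp only [p₀]; field_simp
  rw [hroot, Set.mem_Ioo]
  rcases ha.lt_or_gt with ha | ha
  · have hx' : (a * x - p₀) * (a * x - p₁) < 0 := hfactor x ▸ mul_neg_of_neg_of_pos ha hx
    have hy' : 0 < (a * y - p₀) * (a * y - p₁) := hfactor y ▸ mul_pos_of_neg_of_neg ha hy
    have hyx : a * y < a * x := mul_lt_mul_of_neg_left hxy ha
    obtain ⟨hxp₀, hxp₁⟩ : p₀ < a * x ∧ a * x < p₁ := by
      rcases mul_neg_iff.mp hx' with h | h <;> constructor <;> linarith
    have hyp₀ : a * y < p₀ := by rcases mul_pos_iff.mp hy' with h | h <;> linarith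
    exact ⟨(lt_div_iff_of_neg ha).mpr (by linarith), (div_lt_iff_of_neg ha).mpr (by linarith)⟩
  · have hx' : 0 < (a * x - p₀) * (a * x - p₁) := hfactor x ▸ mul_pos ha hx
    have hy' : (a * y - p₀) * (a * y - p₁) < 0 := hfactor y ▸ mul_neg_of_pos_of_neg ha hy
    have hxy' : a * x < a * y := mul_lt_mul_of_pos_left hxy ha
    obtain ⟨hp₀y, hyp₁⟩ : p₀ < a * y ∧ a * y < p₁ := by
      rcases mul_neg_iff.mp hy' with h | h <;> constructor <;> linarith
    have hxp₀ : a * x < p₀ := by rcases mul_pos_iff.mp hx' with h | h <;> linarith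
    exact ⟨(lt_div_iff₀ ha).mpr (by linarith), (div_lt_iff₀ ha).mpr (by linarith)⟩

theorem r2_positive_and_bounded_general (a22 α β R2 C1 C2 : ℝ)
    (ha22 : 0 < a22) (hα : 0 < α) (hβ : 0 < β) (hne : α ≠ β)
    (hR2 : 0 < R2) (hC1 : 0 < C1) (hC2 : 0 < C2) :
    let Δ : ℝ := (α * (C2 + R2) + β * (C1 - R2)) ^ 2 - 4 * α * C2 * R2 * (α - β)
    let r2 : ℝ := (α * (C2 + R2) + β * (C1 - R2) - Real.sqrt Δ) / (2 * a22 * (α - β))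
    0 < Δ ∧ 0 < r2 ∧ a22 * r2 < R2 := by
  intro Δ r2
  let B := α * (C2 + R2) + β * (C1 - R2)
  have hΔ : Δ = discrim (α - β) (-B) (α * C2 * R2) := by simp only [Δ, B, discrim]; ring
  have hq0 : 0 < (α - β) * (0 * 0) + -B * 0 + α * C2 * R2 := by
    rw [show (α - β) * (0 * 0) + -B * 0 + α * C2 * R2 = α * C2 * R2 by ring]
    positivity
  have hqR2 : (α - β) * (R2 * R2) + -B * R2 + α * C2 * R2 < 0 := by
    rw [show (α - β) * (R2 * R2) + -B * R2 + α * C2 * R2 = -(β * C1 * R2) by simp only [B]; ring]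
    exact neg_neg_of_pos (by positivity)
  have hr2 : a22 * r2 = (- -B - √Δ) / (2 * (α - β)) := by
    simp only [r2, B, neg_neg]; field_simp
  obtain ⟨hprod_pos, hprod_lt⟩ := hr2 ▸ hΔ ▸
    quadratic_root_mem_Ioo_of_pos_of_neg (sub_ne_zero.mpr hne) hR2 hq0 hqR2
  exact ⟨hΔ ▸ discrim_pos_of_pos_of_neg hq0 hqR2, pos_of_mul_pos_right hprod_pos ha22.le, hprod_lt⟩

theorem r2_positive_and_bounded (a22 α β R2 C1 C2 : ℝ)
    (ha22 : 0 < a22) (hα : 0 < α) (hβ : 0 < β) (hne : α ≠ β)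
    (hR2 : 0 < R2) (hC1 : 0 < C1) (hC2 : 0 < C2) (hpos : R2 < C1 + C2) :
    let Δ : ℝ := (α * (C2 + R2) + β * (C1 - R2)) ^ 2 - 4 * α * C2 * R2 * (α - β)
    let r2 : ℝ := (α * (C2 + R2) + β * (C1 - R2) - Real.sqrt Δ) / (2 * a22 * (α - β))
    0 < Δ ∧ 0 < r2 ∧ a22 * r2 < R2 :=
  r2_positive_and_bounded_general a22 α β R2 C1 C2 ha22 hα hβ hne hR2 hC1 hC2
end
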